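/- arXiv:1509.03597 — 6 statements merged into one kernel-verified Lean document; each statement's English description precedes it below -/
import Mathlib

section
/- In an N-player game where each cost decomposes as J^i(u, x^i) = Φ_i(u) + h(u, x^i) with the functions Φ_i admitting a common potential π (i.e., Φ_i(ũ^i, u^{-i}) − Φ_i(û^i, u^{-i}) = π(ũ^i, u^{-i}) − π(û^i, u^{-i}) for all i), and where each player i chooses (u^i, x^i) subject to x^i being determined as a function of the full action profile u through a shared recursion (so that feasible x^i are identical across players given u), any global minimizer (u, w) of π(u) + h(u, w) over the joint feasible set is a Nash equilibrium of the game, with each player's equilibrium state x^i equal to w. -/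
/-!
A unilateral deviation of player `i` changes `Φ i` exactly as it changes the potential `π`, and
it keeps the deviator inside the joint feasible set, because the state recursion is the same for
every player. Hence the deviation cost `Φ i + h` cannot drop below its value at a global
minimiser of `π + h`.
-/

/-- Time index `0` here is the paper's initial time `1`. -/
def Feas3 {ι : Type*} {Act : ι → Type*} {X : Type*}
    (f : ℕ → X → (∀ i, Act i) → X) (x1 : X)
    (u : ∀ i, ℕ → Act i) (w : ℕ → X) : Prop :=
  w 0 = x1 ∧ ∀ k, w (k + 1) = f k (w k) (fun i => u i k)

open Function

section PotentialGame

variable {ι : Type*} [DecidableEq ι] {A : ι → Type*}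

def IsExactPotential (Φ : ι → (∀ i, A i) → ℝ) (π : (∀ i, A i) → ℝ) : Prop :=
  ∀ (i : ι) (u : ∀ j, A j) (v v' : A i),
    Φ i (update u i v) - Φ i (update u i v') = π (update u i v) - π (update u i v')

theorem IsExactPotential.sub_update {Φ : ι → (∀ i, A i) → ℝ} {π : (∀ i, A i) → ℝ}
    (hπ : IsExactPotential Φ π) (i : ι) (u : ∀ j, A j) (v : A i) :
    Φ i (update u i v) - Φ i u = π (update u i v) - π u := by
  simpa only [update_eq_self] using hπ i u v (u i)

theorem IsExactPotential.le_deviation_of_minimizes {S : Type*} {Φ : ι → (∀ i, A i) → ℝ}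
    {π : (∀ i, A i) → ℝ} (hπ : IsExactPotential Φ π) {h : (∀ i, A i) → S → ℝ}
    {feasible : (∀ i, A i) → S → Prop} {u : ∀ i, A i} {w : S}
    (hmin : ∀ u' w', feasible u' w' → π u + h u w ≤ π u' + h u' w')
    {i : ι} {v : A i} {w' : S} (hw' : feasible (update u i v) w') :
    Φ i u + h u w ≤ Φ i (update u i v) + h (update u i v) w' := by
  have hΦ := hπ.sub_update i u v
  have hdev := hmin _ _ hw'
  linarith

end PotentialGame

theorem stmt_3_general {ι : Type*} [DecidableEq ι] {Act : ι → Type*} {X : Type*}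
    (f : ℕ → X → (∀ i, Act i) → X) (x1 : X)
    (Φ : ι → (∀ i, ℕ → Act i) → ℝ)
    (h : (∀ i, ℕ → Act i) → (ℕ → X) → ℝ)
    (π : (∀ i, ℕ → Act i) → ℝ)
    (hpot : ∀ (i : ι) (u : ∀ j, ℕ → Act j) (v v' : ℕ → Act i),
      Φ i (Function.update u i v) - Φ i (Function.update u i v') =
        π (Function.update u i v) - π (Function.update u i v'))
    (u : ∀ i, ℕ → Act i) (w : ℕ → X)
    (hmin : ∀ (u' : ∀ i, ℕ → Act i) (w' : ℕ → X),
      Feas3 f x1 u' w' → π u + h u w ≤ π u' + h u' w') :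
    ∀ (i : ι) (v : ℕ → Act i) (w' : ℕ → X),
      Feas3 f x1 (Function.update u i v) w' →
        Φ i u + h u w ≤ Φ i (Function.update u i v) + h (Function.update u i v) w' :=
  fun _ _ _ hw' =>
    IsExactPotential.le_deviation_of_minimizes (A := fun i => ℕ → Act i) hpot hmin hw'

/-- In a quasi-potential game with costs J^i(u, x^i) = Φ_i(u) + h(u, x^i)
and Φ_i admitting a common potential π, any global minimizer (u, w) of π(u) + h(u, w)
over the joint feasible set is a Nash equilibrium, each player's state being w. -/
theorem stmt_3 {ι : Type*} [DecidableEq ι] {Act : ι → Type*} {X : Type*}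
    (f : ℕ → X → (∀ i, Act i) → X) (x1 : X)
    (Φ : ι → (∀ i, ℕ → Act i) → ℝ)
    (h : (∀ i, ℕ → Act i) → (ℕ → X) → ℝ)
    (π : (∀ i, ℕ → Act i) → ℝ)
    (hpot : ∀ (i : ι) (u : ∀ j, ℕ → Act j) (v v' : ℕ → Act i),
      Φ i (Function.update u i v) - Φ i (Function.update u i v') =
        π (Function.update u i v) - π (Function.update u i v'))
    (u : ∀ i, ℕ → Act i) (w : ℕ → X)
    (hfeas : Feas3 f x1 u w)
    (hmin : ∀ (u' : ∀ i, ℕ → Act i) (w' : ℕ → X),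
      Feas3 f x1 u' w' → π u + h u w ≤ π u' + h u' w') :
    ∀ (i : ι) (v : ℕ → Act i) (w' : ℕ → X),
      Feas3 f x1 (Function.update u i v) w' →
        Φ i u + h u w ≤ Φ i (Function.update u i v) + h (Function.update u i v) w' :=
  stmt_3_general f x1 Φ h π hpot u w hmin
end

section
/- In the discrete-time dynamic game with consistent conjectures, the constraint map Ω'(u, x) = ∏_i Ω'_i(u^{-i}, x^{-i}; x_1) is a shared-constraint map: for every player i, (u^i, x^i) ∈ Ω'_i(u^{-i}, x^{-i}; x_1) if and only if (u, x) ∈ (U × A) ∩ H, where A = { x ∈ X : x^i = x^j for all i, j } and H = { (u, x) : for every i, x^i_2 = f_1(x_1, u_1) and x^i_{k+1} = f_k(x^i_k, u_k) for all k }. In particular, the set on the right is independent of i and equals the fixed-point set F'. -/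
/-- Feasibility of a conjectured state trajectory under a full action profile. -/
def Feas7 {ι : Type*} {Act : ι → Type*} {X : Type*}
    (f : ℕ → X → (∀ i, Act i) → X) (x1 : X)
    (u : ∀ i, ℕ → Act i) (w : ℕ → X) : Prop :=
  w 0 = x1 ∧ ∀ k, w (k + 1) = f k (w k) (fun i => u i k)

section ConsistentFamily

variable {ι α : Type*} {P : α → Prop} {x : ι → α}

theorem forall_eq_of_forall_ne_eq {i : ι} (h : ∀ j, j ≠ i → x i = x j) :
    ∀ p q, x p = x q := by
  have eq_base : ∀ p, x p = x i := fun p => by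
    rcases eq_or_ne p i with rfl | hp
    · rfl
    · exact (h p hp).symm
  exact fun p q => (eq_base p).trans (eq_base q).symm

theorem and_forall_ne_eq_iff (i : ι) :
    (P (x i) ∧ ∀ j, j ≠ i → x i = x j) ↔ (∀ p q, x p = x q) ∧ ∀ p, P (x p) := by
  constructor
  · rintro ⟨hPi, h⟩
    have hall := forall_eq_of_forall_ne_eq h
    exact ⟨hall, fun p => hall i p ▸ hPi⟩
  · rintro ⟨hall, hP⟩
    exact ⟨hP i, fun j _ => hall i j⟩

theorem forall_and_forall_ne_eq_iff :
    (∀ i, P (x i) ∧ ∀ j, j ≠ i → x i = x j) ↔ (∀ p q, x p = x q) ∧ ∀ p, P (x p) := by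
  constructor
  · intro h
    refine ⟨fun p q => ?_, fun p => (h p).1⟩
    rcases eq_or_ne q p with rfl | hqp
    · rfl
    · exact (h p).2 q hqp
  · exact fun h i => (and_forall_ne_eq_iff i).2 h

end ConsistentFamily

/-- The constraint map of the DTDG with consistent conjectures is a
shared-constraint map: for every player i, (u^i, x^i) ∈ Ω'_i(u^{-i}, x^{-i}; x_1)
iff (u, x) lies in the player-independent set (U × A) ∩ H, which is the
fixed-point set F'. -/
theorem stmt_7 {ι : Type*} {Act : ι → Type*} {X : Type*}
    (f : ℕ → X → (∀ i, Act i) → X) (x1 : X)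
    (u : ∀ i, ℕ → Act i) (x : ι → ℕ → X) :
    (∀ i : ι,
      ((Feas7 f x1 u (x i) ∧ ∀ j : ι, j ≠ i → x i = x j) ↔
        ((∀ p q : ι, x p = x q) ∧ ∀ p : ι, Feas7 f x1 u (x p)))) ∧
    (((∀ p q : ι, x p = x q) ∧ ∀ p : ι, Feas7 f x1 u (x p)) ↔
      (∀ i : ι, Feas7 f x1 u (x i) ∧ ∀ j : ι, j ≠ i → x i = x j)) :=
  ⟨fun i => and_forall_ne_eq_iff i, forall_and_forall_ne_eq_iff.symm⟩
end

section
/- In a linear-quadratic discrete-time dynamic game where all players share the same state-weight matrices (Q_{k+1} := Q^i_{k+1} for all i), the stagewise cost functions g^i_k(x^i_{k+1}, u_k) = ½( x^i_{k+1}ᵀ Q_{k+1} x^i_{k+1} + Σ_j u^jᵀ_k R^{ij}_k u^j_k ) admit a quasi-potential decomposition: g^i_k = Ψ^i_k(u_k) + h_k(x^i_{k+1}) where Ψ^i_k(u_k) = ½ Σ_j u^jᵀ_k R^{ij}_k u^j_k admits the common potential π_k(u_k) = ½ Σ_i u^iᵀ_k R^{ii}_k u^i_k, i.e., Ψ^i_k(ũ^i_k,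 u^{-i}_k) − Ψ^i_k(û^i_k, u^{-i}_k) = π_k(ũ^i_k, u^{-i}_k) − π_k(û^i_k, u^{-i}_k) for all i, all ũ^i_k, û^i_k, and all u^{-i}_k, and h_k(x) = ½ xᵀ Q_{k+1} x is independent of the player index. -/
open Matrix Function

theorem Fintype.sum_update_sub_sum_update {ι M : Type*} [Fintype ι] [DecidableEq ι]
    [AddCommGroup M] {β : ι → Type*} (G : ∀ j, β j → M) (u : ∀ j, β j) (i : ι)
    (v v' : β i) :
    ∑ j, G j (update u i v j) - ∑ j, G j (update u i v' j) = G i v - G i v' := by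
  have split : ∀ w : β i, ∑ j, G j (update u i w j) = G i w + ∑ j ∈ {i}ᶜ, G j (u j) := by
    intro w
    rw [Fintype.sum_eq_add_sum_compl i, update_self]
    congr 1
    exact Finset.sum_congr rfl fun j hj =>
      by rw [update_of_ne (Finset.mem_compl.1 hj ∘ Finset.mem_singleton.2)]
  rw [split, split]
  abel

/-- In a linear-quadratic DTDG with a common state-weight matrix
Q_{k+1}, the stagewise cost g^i_k decomposes as Ψ^i_k(u_k) + h_k(x^i_{k+1}) with
Ψ^i_k admitting the common potential π_k and h_k player-independent. -/
theorem stmt_10 {N n : ℕ} (m : Fin N → ℕ) [DecidableEq (Fin N)]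
    (Q : Matrix (Fin n) (Fin n) ℝ)
    (R : ∀ _ : Fin N, ∀ j : Fin N, Matrix (Fin (m j)) (Fin (m j)) ℝ) :
    -- quasi-potential decomposition g^i_k = Ψ^i_k + h_k
    (∀ (i : Fin N) (x : Fin n → ℝ) (u : ∀ j, Fin (m j) → ℝ),
      (1 / 2 : ℝ) * (x ⬝ᵥ Q.mulVec x + ∑ j, u j ⬝ᵥ (R i j).mulVec (u j)) =
        ((1 / 2 : ℝ) * ∑ j, u j ⬝ᵥ (R i j).mulVec (u j)) +
        (1 / 2 : ℝ) * (x ⬝ᵥ Q.mulVec x)) ∧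
    -- π_k is a potential for the family Ψ^i_k
    (∀ (i : Fin N) (u : ∀ j, Fin (m j) → ℝ) (v v' : Fin (m i) → ℝ),
      ((1 / 2 : ℝ) * ∑ j, Function.update u i v j ⬝ᵥ
          (R i j).mulVec (Function.update u i v j)) -
      ((1 / 2 : ℝ) * ∑ j, Function.update u i v' j ⬝ᵥ
          (R i j).mulVec (Function.update u i v' j)) =
      ((1 / 2 : ℝ) * ∑ j, Function.update u i v j ⬝ᵥ
          (R j j).mulVec (Function.update u i v j)) -
      ((1 / 2 : ℝ) * ∑ j, Function.update u i v' j ⬝ᵥ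
          (R j j).mulVec (Function.update u i v' j))) := by
  refine ⟨fun i x u => by ring, fun i u v v' => ?_⟩
  rw [← mul_sub, ← mul_sub,
    Fintype.sum_update_sub_sum_update (fun j z => z ⬝ᵥ R i j *ᵥ z),
    Fintype.sum_update_sub_sum_update (fun j z => z ⬝ᵥ R j j *ᵥ z)]
end

section
/- If (u*, w*) is a Nash equilibrium of an N-player game in which each player i's penalized cost is J^i(v) + μ_i · p_i(v) with p_i ≥ 0 and p_i(u*, w*) = 0 over feasible sets Ω_i, and for each i the quantity μ_i · p_i evaluated at any best response of player i in the unpenalized game is at most ε_i, then (u*, w*) is an ε-Nash equilibrium of the unpenalized game with ε = max_i ε_i, provided best responses exist. -/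
theorem le_add_of_isMinOn_add_of_isMinOn {α β : Type*} [AddCommMonoid β] [PartialOrder β]
    [IsOrderedAddMonoid β] {s : Set α} {f g : α → β} {a b : α} {ε : β}
    (ha : IsMinOn (f + g) s a) (hga : 0 ≤ g a) (hbs : b ∈ s) (hb : IsMinOn f s b)
    (hgb : g b ≤ ε) {v : α} (hv : v ∈ s) : f a ≤ f v + ε :=
  calc f a ≤ f a + g a := le_add_of_nonneg_right hga
    _ ≤ f b + g b := isMinOn_iff.1 ha b hbs
    _ ≤ f v + ε := add_le_add (isMinOn_iff.1 hb v hv) hgb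

theorem stmt_13_general {N : ℕ} {D : Fin (N + 1) → Type*} [DecidableEq (Fin (N + 1))]
    (Ω : ∀ i, Set (D i))
    (J : Fin (N + 1) → (∀ i, D i) → ℝ)
    (p : Fin (N + 1) → (∀ i, D i) → ℝ)
    (μ ε : Fin (N + 1) → ℝ)
    (dstar : ∀ i, D i)
    (hp_star : ∀ i, p i dstar = 0)
    (hpenNE : ∀ (i : Fin (N + 1)) (v : D i), v ∈ Ω i →
      J i dstar + μ i * p i dstar ≤
        J i (Function.update dstar i v) + μ i * p i (Function.update dstar i v))
    (hbr : ∀ i : Fin (N + 1), ∃ b ∈ Ω i,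
      (∀ v ∈ Ω i, J i (Function.update dstar i b) ≤ J i (Function.update dstar i v)) ∧
      μ i * p i (Function.update dstar i b) ≤ ε i) :
    ∀ (i : Fin (N + 1)) (v : D i), v ∈ Ω i →
      J i dstar ≤ J i (Function.update dstar i v) +
        Finset.univ.sup' (Finset.univ_nonempty) ε := by
  intro i v hv
  obtain ⟨b, hb, hbest, hpen⟩ := hbr i
  have hpenMin : IsMinOn (fun w => J i (Function.update dstar i w) +
      μ i * p i (Function.update dstar i w)) (Ω i) (dstar i) :=
    isMinOn_iff.2 fun w hw => by simpa only [Function.update_eq_self] using hpenNE i w hw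
  have hε := le_add_of_isMinOn_add_of_isMinOn (g := fun w => μ i * p i (Function.update dstar i w))
    hpenMin (by simp [hp_star i]) hb (isMinOn_iff.2 hbest) hpen hv
  calc J i dstar ≤ J i (Function.update dstar i v) + ε i := by
        simpa only [Function.update_eq_self] using hε
    _ ≤ _ := add_le_add_right (Finset.le_sup' ε (Finset.mem_univ i)) _

/-- If (u*, w*) is a Nash equilibrium of the penalized game
(costs J^i + μ_i·p_i, with p_i ≥ 0 vanishing at the equilibrium), and for each
player the penalty term evaluated at a best response of the unpenalized game is
at most ε_i, then (u*, w*) is an ε-Nash equilibrium of the unpenalized game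
with ε = max_i ε_i. -/
theorem stmt_13 {N : ℕ} {D : Fin (N + 1) → Type*} [DecidableEq (Fin (N + 1))]
    (Ω : ∀ i, Set (D i))
    (J : Fin (N + 1) → (∀ i, D i) → ℝ)
    (p : Fin (N + 1) → (∀ i, D i) → ℝ)
    (μ ε : Fin (N + 1) → ℝ)
    (dstar : ∀ i, D i) (hfeas : ∀ i, dstar i ∈ Ω i)
    (hp_nonneg : ∀ i d, 0 ≤ p i d)
    (hp_star : ∀ i, p i dstar = 0)
    (hpenNE : ∀ (i : Fin (N + 1)) (v : D i), v ∈ Ω i →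
      J i dstar + μ i * p i dstar ≤
        J i (Function.update dstar i v) + μ i * p i (Function.update dstar i v))
    (hbr : ∀ i : Fin (N + 1), ∃ b ∈ Ω i,
      (∀ v ∈ Ω i, J i (Function.update dstar i b) ≤ J i (Function.update dstar i v)) ∧
      μ i * p i (Function.update dstar i b) ≤ ε i) :
    ∀ (i : Fin (N + 1)) (v : D i), v ∈ Ω i →
      J i dstar ≤ J i (Function.update dstar i v) +
        Finset.univ.sup' (Finset.univ_nonempty) ε :=
  stmt_13_general Ω J p μ ε dstar hp_star hpenNE hbr
end

section
/- In a game where each player i's decision variables include equality constraints x^i = x^{j} for all j ≠ i (consistency with all rivals), a profile is a Nash equilibrium of this game if and only if it is a Nash equilibrium of the modified game where each player i's consistency constraint is replaced by the single constraint x^i = x^{j(i)}, where j(i) = i+1 for i < N and j(N) = 1 (consistency with the next labelled player only), provided in both cases equilibrium candidates satisfy full consistency. -/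
/-!
At a fully consistent profile all conjectures `x j` are one and the same trajectory, so
"agree with every rival" and "agree with the next player" carve out the same set of
deviations `w` for each player; the two Nash conditions then quantify over identical sets.
The only arithmetic input is that the next player `i + 1` is a genuine rival, i.e.
`i + 1 ≠ i` in `Fin N` once `N ≥ 2`.
-/

theorem Fin.add_one_ne_self {N : ℕ} [NeZero N] (hN : 2 ≤ N) (i : Fin N) : i + 1 ≠ i :=
  add_ne_left.mpr <| by simp [Fin.ext_iff, Nat.mod_eq_of_lt hN]

theorem forall_ne_eq_iff_eq_of_forall_eq {ι α : Type*} {x : ι → α}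
    (hcons : ∀ i j, x i = x j) {i k : ι} (hki : k ≠ i) (w : α) :
    (∀ j, j ≠ i → w = x j) ↔ w = x k :=
  ⟨fun hw => hw k hki, fun hw j _ => hw.trans (hcons k j)⟩

/-- A fully consistent profile is a Nash equilibrium of the game
G_c (each player's conjecture constrained to agree with all rivals) iff it is a
Nash equilibrium of the game G_a (each player's conjecture constrained to agree
only with the next labelled player j(i) = i+1 mod N). -/
theorem stmt_15 {N : ℕ} [NeZero N] (hN : 2 ≤ N)
    {Act : Fin N → Type*} {X : Type*}
    (Feas : (∀ i, Act i) → (ℕ → X) → Prop)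
    (J : Fin N → (∀ i, Act i) → (ℕ → X) → ℝ)
    (u : ∀ i, Act i) (x : Fin N → ℕ → X)
    (hcons : ∀ i j : Fin N, x i = x j) :
    ((∀ (i : Fin N) (v : Act i) (w : ℕ → X),
        (Feas (Function.update u i v) w ∧ ∀ j : Fin N, j ≠ i → w = x j) →
          J i u (x i) ≤ J i (Function.update u i v) w) ↔
      (∀ (i : Fin N) (v : Act i) (w : ℕ → X),
        (Feas (Function.update u i v) w ∧ w = x (i + 1)) →
          J i u (x i) ≤ J i (Function.update u i v) w)) := by
  refine forall_congr' fun i => forall_congr' fun v => forall_congr' fun w => ?_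
  rw [forall_ne_eq_iff_eq_of_forall_eq hcons (Fin.add_one_ne_self hN i) w]
end

section
/- In a two-player, two-stage discrete-time dynamic game with scalar states and actions, dynamics x_{k+1} = a_k x_k + b^1_k u^1_k + b^2_k u^2_k, and costs J^i = Σ_{k=1}^{2} ½( q_{k+1} x_{k+1}^2 + r^{i1}_k (u^1_k)^2 + r^{i2}_k (u^2_k)^2 ) with q_{k+1} > 0 and r^{ii}_k > 0 for both players i, the function (u, w) ↦ Σ_k ½( q_{k+1} w_{k+1}^2 + r^{11}_k (u^1_k)^2 + r^{22}_k (u^2_k)^2 ) restricted to the set F^q of (u, w) satisfying the state recursion is continuous and coercive, and hence attains a global minimum; this minimum yields an open-loop Nash equilibrium of the game. -/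
/-!
The game is an exact potential game on the feasible set `F^q`: player `i`'s cost differs from the
quasi-potential only by the terms in the *other* player's actions, which a unilateral deviation
leaves unchanged. Hence a minimiser of the quasi-potential over `F^q` is an open-loop Nash
equilibrium. The quasi-potential is a positive definite quadratic form, so it dominates
`c ‖p‖²` for some `c > 0`; it is therefore coercive and attains its minimum on the closed set `F^q`.
-/

open Filter Bornology

theorem Prod.sq_norm_le_add {E F : Type*} [Norm E] [Norm F] (x : E × F) :
    ‖x‖ ^ 2 ≤ ‖x.1‖ ^ 2 + ‖x.2‖ ^ 2 := by
  rw [Prod.norm_def]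
  rcases max_choice ‖x.1‖ ‖x.2‖ with h | h <;> rw [h]
  · exact le_add_of_nonneg_right (sq_nonneg _)
  · exact le_add_of_nonneg_left (sq_nonneg _)

theorem tendsto_cobounded_atTop_of_mul_sq_norm_le {E : Type*} [SeminormedAddGroup E]
    {f : E → ℝ} {c : ℝ} (hc : 0 < c) (hf : ∀ x, c * ‖x‖ ^ 2 ≤ f x) :
    Tendsto f (cobounded E) atTop :=
  tendsto_atTop_mono hf <|
    ((tendsto_pow_atTop two_ne_zero).const_mul_atTop hc).comp tendsto_norm_cobounded_atTop

/-- Cost at the decision point `p = (u¹, u², w)`, where `ρᵢₖ` weights `uⁱₖ` and `q₂, q₃` weight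
the states `w₂, w₃`. -/
noncomputable def lqCost (q₂ q₃ ρ₁₁ ρ₁₂ ρ₂₁ ρ₂₂ : ℝ) (p : (ℝ × ℝ) × (ℝ × ℝ) × (ℝ × ℝ)) : ℝ :=
  1 / 2 * (q₂ * p.2.2.1 ^ 2 + ρ₁₁ * p.1.1 ^ 2 + ρ₂₁ * p.2.1.1 ^ 2) +
  1 / 2 * (q₃ * p.2.2.2 ^ 2 + ρ₁₂ * p.1.2 ^ 2 + ρ₂₂ * p.2.1.2 ^ 2)

section lqCost

variable {q₂ q₃ ρ₁₁ ρ₁₂ ρ₂₁ ρ₂₂ : ℝ}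

theorem continuous_lqCost : Continuous (lqCost q₂ q₃ ρ₁₁ ρ₁₂ ρ₂₁ ρ₂₂) := by
  unfold lqCost; fun_prop

theorem exists_pos_mul_sq_norm_le_lqCost (hq₂ : 0 < q₂) (hq₃ : 0 < q₃) (hρ₁₁ : 0 < ρ₁₁)
    (hρ₁₂ : 0 < ρ₁₂) (hρ₂₁ : 0 < ρ₂₁) (hρ₂₂ : 0 < ρ₂₂) :
    ∃ c > 0, ∀ p, c * ‖p‖ ^ 2 ≤ lqCost q₂ q₃ ρ₁₁ ρ₁₂ ρ₂₁ ρ₂₂ p := by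
  set m := min (min q₂ q₃) (min (min ρ₁₁ ρ₁₂) (min ρ₂₁ ρ₂₂))
  have hm : 0 < m := by positivity
  refine ⟨m / 2, by positivity, fun ⟨⟨u₁, u₂⟩, ⟨v₁, v₂⟩, ⟨w₂, w₃⟩⟩ => ?_⟩
  have hnorm : ‖((u₁, u₂), (v₁, v₂), (w₂, w₃))‖ ^ 2 ≤
      u₁ ^ 2 + u₂ ^ 2 + v₁ ^ 2 + v₂ ^ 2 + w₂ ^ 2 + w₃ ^ 2 := by
    have h₁ := Prod.sq_norm_le_add ((u₁, u₂), (v₁, v₂), (w₂, w₃))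
    have h₂ := Prod.sq_norm_le_add ((v₁, v₂), (w₂, w₃))
    have h₃ := Prod.sq_norm_le_add (u₁, u₂)
    have h₄ := Prod.sq_norm_le_add (v₁, v₂)
    have h₅ := Prod.sq_norm_le_add (w₂, w₃)
    simp only [Real.norm_eq_abs, sq_abs] at h₁ h₂ h₃ h₄ h₅
    linarith
  have hm_le : m ≤ q₂ ∧ m ≤ q₃ ∧ m ≤ ρ₁₁ ∧ m ≤ ρ₁₂ ∧ m ≤ ρ₂₁ ∧ m ≤ ρ₂₂ := by
    simp only [m, min_le_iff, le_refl, true_or, or_true, and_self]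
  obtain ⟨h₁, h₂, h₃, h₄, h₅, h₆⟩ := hm_le
  unfold lqCost
  nlinarith [mul_le_mul_of_nonneg_left hnorm hm.le,
    mul_le_mul_of_nonneg_right h₁ (sq_nonneg w₂), mul_le_mul_of_nonneg_right h₂ (sq_nonneg w₃),
    mul_le_mul_of_nonneg_right h₃ (sq_nonneg u₁), mul_le_mul_of_nonneg_right h₄ (sq_nonneg u₂),
    mul_le_mul_of_nonneg_right h₅ (sq_nonneg v₁), mul_le_mul_of_nonneg_right h₆ (sq_nonneg v₂)]

theorem lqCost_le_lqCost_of_snd_fst_eq {σ₂₁ σ₂₂ : ℝ} {p p' : (ℝ × ℝ) × (ℝ × ℝ) × (ℝ × ℝ)}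
    (h : p'.2.1 = p.2.1) (hle : lqCost q₂ q₃ ρ₁₁ ρ₁₂ ρ₂₁ ρ₂₂ p ≤ lqCost q₂ q₃ ρ₁₁ ρ₁₂ ρ₂₁ ρ₂₂ p') :
    lqCost q₂ q₃ ρ₁₁ ρ₁₂ σ₂₁ σ₂₂ p ≤ lqCost q₂ q₃ ρ₁₁ ρ₁₂ σ₂₁ σ₂₂ p' := by
  unfold lqCost at *
  rw [h] at hle ⊢
  linarith

theorem lqCost_le_lqCost_of_fst_eq {σ₁₁ σ₁₂ : ℝ} {p p' : (ℝ × ℝ) × (ℝ × ℝ) × (ℝ × ℝ)}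
    (h : p'.1 = p.1) (hle : lqCost q₂ q₃ ρ₁₁ ρ₁₂ ρ₂₁ ρ₂₂ p ≤ lqCost q₂ q₃ ρ₁₁ ρ₁₂ ρ₂₁ ρ₂₂ p') :
    lqCost q₂ q₃ σ₁₁ σ₁₂ ρ₂₁ ρ₂₂ p ≤ lqCost q₂ q₃ σ₁₁ σ₁₂ ρ₂₁ ρ₂₂ p' := by
  unfold lqCost at *
  rw [h] at hle ⊢
  linarith

end lqCost

/-- Two-player, two-stage scalar linear-quadratic DTDG: the
quasi-potential function restricted to the feasible set F^q is continuous and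
coercive, hence attains a global minimum, and this minimum is an open-loop Nash
equilibrium of the game. Decision points are p = (u¹, u², w) with
u¹ = (u¹₁, u¹₂), u² = (u²₁, u²₂), w = (w₂, w₃). -/
theorem stmt_17 (x1 a1 a2 b11 b21 b12 b22 r121 r122 r211 r212 : ℝ)
    (q2 q3 r111 r112 r221 r222 : ℝ)
    (hq2 : 0 < q2) (hq3 : 0 < q3) (h111 : 0 < r111) (h112 : 0 < r112)
    (h221 : 0 < r221) (h222 : 0 < r222) :
    let Fq : Set ((ℝ × ℝ) × (ℝ × ℝ) × (ℝ × ℝ)) :=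
      {p | p.2.2.1 = a1 * x1 + b11 * p.1.1 + b21 * p.2.1.1 ∧
           p.2.2.2 = a2 * p.2.2.1 + b12 * p.1.2 + b22 * p.2.1.2}
    let φ : (ℝ × ℝ) × (ℝ × ℝ) × (ℝ × ℝ) → ℝ := fun p =>
      1 / 2 * (q2 * p.2.2.1 ^ 2 + r111 * p.1.1 ^ 2 + r221 * p.2.1.1 ^ 2) +
      1 / 2 * (q3 * p.2.2.2 ^ 2 + r112 * p.1.2 ^ 2 + r222 * p.2.1.2 ^ 2)
    let J1 : (ℝ × ℝ) × (ℝ × ℝ) × (ℝ × ℝ) → ℝ := fun p =>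
      1 / 2 * (q2 * p.2.2.1 ^ 2 + r111 * p.1.1 ^ 2 + r121 * p.2.1.1 ^ 2) +
      1 / 2 * (q3 * p.2.2.2 ^ 2 + r112 * p.1.2 ^ 2 + r122 * p.2.1.2 ^ 2)
    let J2 : (ℝ × ℝ) × (ℝ × ℝ) × (ℝ × ℝ) → ℝ := fun p =>
      1 / 2 * (q2 * p.2.2.1 ^ 2 + r211 * p.1.1 ^ 2 + r221 * p.2.1.1 ^ 2) +
      1 / 2 * (q3 * p.2.2.2 ^ 2 + r212 * p.1.2 ^ 2 + r222 * p.2.1.2 ^ 2)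
    ContinuousOn φ Fq ∧
    (∀ M : ℝ, ∃ R : ℝ, ∀ p ∈ Fq, R ≤ ‖p‖ → M ≤ φ p) ∧
    ∃ p ∈ Fq, (∀ p' ∈ Fq, φ p ≤ φ p') ∧
      (∀ v1 w' : ℝ × ℝ,
        (w'.1 = a1 * x1 + b11 * v1.1 + b21 * p.2.1.1 ∧
         w'.2 = a2 * w'.1 + b12 * v1.2 + b22 * p.2.1.2) →
          J1 p ≤ J1 (v1, p.2.1, w')) ∧
      (∀ v2 w' : ℝ × ℝ,
        (w'.1 = a1 * x1 + b11 * p.1.1 + b21 * v2.1 ∧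
         w'.2 = a2 * w'.1 + b12 * p.1.2 + b22 * v2.2) →
          J2 p ≤ J2 (p.1, v2, w')) := by
  intro Fq φ J1 J2
  have hφ_cont : Continuous φ := continuous_lqCost
  obtain ⟨c, hc, hφ_ge⟩ := exists_pos_mul_sq_norm_le_lqCost hq2 hq3 h111 h112 h221 h222
  have hφ_coercive : Tendsto φ (cobounded _) atTop :=
    tendsto_cobounded_atTop_of_mul_sq_norm_le hc hφ_ge
  have hFq_closed : IsClosed Fq :=
    (isClosed_eq (by fun_prop) (by fun_prop)).inter (isClosed_eq (by fun_prop) (by fun_prop))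
  have hp₀ : ((0, 0), (0, 0), (a1 * x1, a2 * (a1 * x1))) ∈ Fq := ⟨by ring, by ring⟩
  obtain ⟨p, hp, hmin⟩ := hφ_cont.continuousOn.exists_isMinOn' hFq_closed hp₀ <|
    ((hφ_coercive.mono_left Metric.cobounded_eq_cocompact.ge).eventually_ge_atTop _).filter_mono
      inf_le_left
  refine ⟨hφ_cont.continuousOn, fun M => ?_, p, hp, isMinOn_iff.1 hmin,
    fun v1 w' hw' => lqCost_le_lqCost_of_snd_fst_eq rfl (isMinOn_iff.1 hmin _ hw'),
    fun v2 w' hw' => lqCost_le_lqCost_of_fst_eq rfl (isMinOn_iff.1 hmin _ hw')⟩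
  obtain ⟨R, -, hR⟩ := hasBasis_cobounded_norm.eventually_iff.1 (hφ_coercive.eventually_ge_atTop M)
  exact ⟨R, fun p' _ hp' => hR hp'⟩
end
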